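/- arXiv:1911.03316 — 11 statements merged into one kernel-verified Lean document; each statement's English description precedes it below -/
import Mathlib

section
/- For all integers m ≥ 1, j with 0 ≤ j ≤ m, and all k ∈ ℤ, one has φ(m,j,−(j+k)) = φ(m,j,k). -/
/-!
Multiplying by `m`, `m * φ(m,j,k) = -k(k+j) + c(k mod m)` for a correction term `c` that depends
only on the residue of `k`. The quadratic part is invariant under the reflection `k ↦ -(j+k)`,
which acts on residues by `r ↦ (-j-r) mod m`; for `0 ≤ r < m` this residue is `m-j-r` when
`r+j ≤ m` (or `0` when `r = j = 0`) and `2m-j-r` otherwise, and in each case `c` takes the same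
value.
-/

/-- The δ-coefficient function `φ(m,j,k)` for type `A₁⁽¹⁾`: writing `k = m*q + r` by
Euclidean division (`0 ≤ r < m` when `1 ≤ m`), set `φ(m,j,k) = -q*(k+r+j) - r` if
`0 ≤ r ≤ m - j`, and `φ(m,j,k) = -q*(k+r+j) + m - j - 2*r` if `m - j ≤ r < m`
(the two expressions agree at `r = m - j`). -/
def phi (m j k : ℤ) : ℤ :=
  -(k.ediv m) * (k + k.emod m + j) +
    (if k.emod m ≤ m - j then -(k.emod m) else m - j - 2 * (k.emod m))

def phiCorrection (m j r : ℤ) : ℤ :=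
  r * (r + j) + m * (if r ≤ m - j then -r else m - j - 2 * r)

lemma mul_phi_eq (m j k : ℤ) :
    m * phi m j k = -(k * (k + j)) + phiCorrection m j (k % m) := by
  have hk : k = m * (k / m) + k % m := (Int.mul_ediv_add_emod k m).symm
  change m * (-(k / m) * (k + k % m + j) +
    (if k % m ≤ m - j then -(k % m) else m - j - 2 * (k % m))) = _
  unfold phiCorrection
  generalize k / m = q, k % m = r at hk ⊢
  subst hk
  ring

lemma phiCorrection_emod_neg_sub {m j r : ℤ} (hj0 : 0 ≤ j) (hjm : j ≤ m) (hr0 : 0 ≤ r)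
    (hrm : r < m) : phiCorrection m j ((-j - r) % m) = phiCorrection m j r := by
  unfold phiCorrection
  rcases eq_or_ne (j + r) 0 with hjr | hjr
  · obtain ⟨rfl, rfl⟩ : j = 0 ∧ r = 0 := by omega
    simp
  rcases le_or_gt (j + r) m with hle | hgt
  · have hres : (-j - r) % m = m - j - r := by
      rw [show -j - r = m - j - r + (-1) * m by ring, Int.add_mul_emod_self_right,
        Int.emod_eq_of_lt (by omega) (by omega)]
    rw [hres, if_pos (by omega), if_pos (by omega)]
    ring
  · have hres : (-j - r) % m = 2 * m - j - r := by
      rw [show -j - r = 2 * m - j - r + (-2) * m by ring, Int.add_mul_emod_self_right,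
        Int.emod_eq_of_lt (by omega) (by omega)]
    rw [hres, if_neg (by omega), if_neg (by omega)]
    ring

/-- For all integers `m ≥ 1`, `0 ≤ j ≤ m` and all `k : ℤ`,
one has `φ(m,j,−(j+k)) = φ(m,j,k)`. -/
theorem phi_reflection (m j k : ℤ) (hm : 1 ≤ m) (hj0 : 0 ≤ j) (hjm : j ≤ m) :
    phi m j (-(j + k)) = phi m j k := by
  have hm0 : 0 < m := by omega
  have hres : -(j + k) % m = (-j - k % m) % m := by
    rw [show -(j + k) = -j - k % m + -(k / m) * m by linarith [Int.mul_ediv_add_emod k m],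
      Int.add_mul_emod_self_right]
  apply mul_left_cancel₀ hm0.ne'
  rw [mul_phi_eq, mul_phi_eq, hres,
    phiCorrection_emod_neg_sub hj0 hjm (Int.emod_nonneg k hm0.ne') (Int.emod_lt_of_pos k hm0)]
  ring
end

section
/- Let m ≥ 1 and 0 ≤ j ≤ m be integers and k ∈ ℤ. Then (a) for every odd integer p satisfying |k + j/2 − mp/2| ≤ (m−j)/2 one has φ(m,j,k) + k(k+j)/m = ((k + j/2 − mp/2)² − (m−j)²/4)/m, and (b) for every even integer p satisfying |k + j/2 − mp/2| ≤ j/2 one has φ(m,j,k) + k(k+j)/m = ((k + j/2 − mp/2)² − j²/4)/m (all identities in ℚ). -/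
lemma Int.emod_eq_sub_mul_of_nonneg_of_lt {k m t : ℤ} (h0 : 0 ≤ k - m * t)
    (h1 : k - m * t < m) : k % m = k - m * t := by
  rw [← Int.emod_eq_of_lt h0 h1, Int.sub_mul_emod_self_left]

lemma phi_eq (m j k : ℤ) : phi m j k =
    -(k / m) * (k + k % m + j) + (if k % m ≤ m - j then -(k % m) else m - j - 2 * (k % m)) :=
  rfl

lemma mul_phi_add_mul_eq_of_emod_le {m j k : ℤ} (h : k % m ≤ m - j) :
    m * phi m j k + k * (k + j) = k % m * (k % m + j - m) := by
  rw [phi_eq, if_pos h]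
  linear_combination (-(k % m) - k - j) * Int.mul_ediv_add_emod k m

lemma mul_phi_add_mul_eq_of_le_emod {m j k : ℤ} (h : m - j ≤ k % m) :
    m * phi m j k + k * (k + j) = (k % m - m) * (k % m - m + j) := by
  rcases h.eq_or_lt with h | h
  · rw [mul_phi_add_mul_eq_of_emod_le h.ge, ← h]
    ring
  · rw [phi_eq, if_neg h.not_ge]
    linear_combination (-(k % m) - k - j) * Int.mul_ediv_add_emod k m

lemma mul_phi_add_mul_eq_of_odd_window {m j k t : ℤ} (hj : 0 ≤ j)
    (hlo : m * t ≤ k) (hhi : k ≤ m * t + m - j) :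
    m * phi m j k + k * (k + j) = (k - m * t) * (k - m * t + j - m) := by
  rcases (show k ≤ m * t + m by linarith).lt_or_eq with hlt | hedge
  · have hr : k % m = k - m * t :=
      Int.emod_eq_sub_mul_of_nonneg_of_lt (by linarith) (by linarith)
    rw [mul_phi_add_mul_eq_of_emod_le (by omega), hr]
  · have hr : k % m = 0 := by simp [hedge]
    rw [mul_phi_add_mul_eq_of_emod_le (by omega), hr, hedge, show j = 0 by linarith]
    ring

lemma mul_phi_add_mul_eq_of_even_window {m j k t : ℤ} (hjm : j ≤ m)
    (hlo : m * t - j ≤ k) (hhi : k ≤ m * t) :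
    m * phi m j k + k * (k + j) = (k - m * t) * (k - m * t + j) := by
  rcases hhi.lt_or_eq with hlt | hedge
  · have hr : k % m = k - m * t + m :=
      (Int.emod_eq_sub_mul_of_nonneg_of_lt (t := t - 1) (by linarith) (by linarith)).trans
        (by ring)
    rw [mul_phi_add_mul_eq_of_le_emod (by omega), hr]
    ring
  · have hr : k % m = 0 := by simp [hedge]
    rw [mul_phi_add_mul_eq_of_emod_le (by omega), hr, hedge]
    ring

lemma cast_phi_add_div_eq {m j k n : ℤ} {x : ℚ} (hm : (m : ℚ) ≠ 0)
    (h : m * phi m j k + k * (k + j) = n) (hx : (n : ℚ) = x) :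
    (phi m j k : ℚ) + k * (k + j) / m = x / m := by
  rw [eq_div_iff hm, add_mul, div_mul_cancel₀ _ hm, ← hx, ← h]
  push_cast
  ring

/-- Piecewise-quadratic description of `φ(m,j,k) + k(k+j)/m` in `ℚ`:
(a) for every odd `p` with `|k + j/2 − mp/2| ≤ (m−j)/2`, it equals
`((k + j/2 − mp/2)² − (m−j)²/4)/m`; (b) for every even `p` with
`|k + j/2 − mp/2| ≤ j/2`, it equals `((k + j/2 − mp/2)² − j²/4)/m`. -/
theorem phi_quadratic (m j k : ℤ) (hm : 1 ≤ m) (hj0 : 0 ≤ j) (hjm : j ≤ m) :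
    (∀ p : ℤ, Odd p →
      |(k : ℚ) + (j : ℚ) / 2 - (m : ℚ) * (p : ℚ) / 2| ≤ ((m : ℚ) - (j : ℚ)) / 2 →
      (phi m j k : ℚ) + (k : ℚ) * ((k : ℚ) + (j : ℚ)) / (m : ℚ) =
        (((k : ℚ) + (j : ℚ) / 2 - (m : ℚ) * (p : ℚ) / 2) ^ 2
          - ((m : ℚ) - (j : ℚ)) ^ 2 / 4) / (m : ℚ)) ∧
    (∀ p : ℤ, Even p →
      |(k : ℚ) + (j : ℚ) / 2 - (m : ℚ) * (p : ℚ) / 2| ≤ (j : ℚ) / 2 →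
      (phi m j k : ℚ) + (k : ℚ) * ((k : ℚ) + (j : ℚ)) / (m : ℚ) =
        (((k : ℚ) + (j : ℚ) / 2 - (m : ℚ) * (p : ℚ) / 2) ^ 2
          - (j : ℚ) ^ 2 / 4) / (m : ℚ)) := by
  have hmQ : (m : ℚ) ≠ 0 := by positivity
  constructor
  · rintro p ⟨t, rfl⟩ hp
    obtain ⟨hlo, hhi⟩ := abs_le.mp hp
    push_cast at hlo hhi
    refine cast_phi_add_div_eq hmQ (mul_phi_add_mul_eq_of_odd_window (t := t) hj0 ?_ ?_)
      (by push_cast; ring) <;> qify <;> linarith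
  · rintro p ⟨t, rfl⟩ hp
    obtain ⟨hlo, hhi⟩ := abs_le.mp hp
    push_cast at hlo hhi
    refine cast_phi_add_div_eq hmQ (mul_phi_add_mul_eq_of_even_window (t := t) hjm ?_ ?_)
      (by push_cast; ring) <;> qify <;> linarith
end

section
/- Let m ≥ 1, u ≥ 1, j, j' be integers with 0 ≤ j ≤ m, 0 ≤ j' ≤ um, and j' ≡ j (mod 2). For n ∈ ℤ define N(n) = −φ(m,j,(j'−j)/2 − n(um+2)) + u·n·(j' + 1 − n(um+2)). Then N, viewed as a function of n ∈ ℤ, attains its minimum at n = 0; i.e., N(n) ≥ N(0) for every n ∈ ℤ. -/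
lemma int_quadratic_nonneg {a c x : ℤ} (hc : 0 ≤ c) (hca : c ≤ a) (hx : |x| ≤ a + c)
    (d : ℤ) :
    0 ≤ a * d ^ 2 + d * x + c := by
  rcases eq_or_ne d 0 with rfl | hd
  · simpa using hc
  have hdx : -(|d| * (a + c)) ≤ d * x :=
    calc -(|d| * (a + c)) ≤ -(|d| * |x|) :=
          neg_le_neg (mul_le_mul_of_nonneg_left hx (abs_nonneg d))
      _ = -|d * x| := by rw [abs_mul]
      _ ≤ d * x := neg_abs_le _
  have hd1 : 1 ≤ |d| := Int.one_le_abs hd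
  have hfactor : 0 ≤ (|d| - 1) * (a * |d| - c) :=
    mul_nonneg (by linarith) (by nlinarith)
  rw [← sq_abs d]
  linear_combination hfactor + hdx

/-- For `e ∈ {0, 1}` these are the supporting lines of the convex piecewise-linear function
`k ↦ -phi m j k`: the one of slope `2p + 1` touches it on `[m p, m p + m - j]`, the one of
slope `2p` on `[m p - j, m p]`. -/
def supportLine (m j p e k : ℤ) : ℤ := (2 * p + e) * k + p * j - m * p * (p + e)

section
variable {m j : ℤ}

lemma phi_eq_ediv_emod (k : ℤ) : phi m j k =
    -(k / m) * (k + k % m + j) + if k % m ≤ m - j then -(k % m) else m - j - 2 * (k % m) := rfl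

lemma supportLine_le_neg_phi (hm : 0 < m) (hj0 : 0 ≤ j) (hjm : j ≤ m) {e : ℤ}
    (he : e = 0 ∨ e = 1) (p k : ℤ) :
    supportLine m j p e k ≤ -phi m j k := by
  have hk := Int.mul_ediv_add_emod k m
  have hr0 := Int.emod_nonneg k hm.ne'
  have hrm := Int.emod_lt_of_pos k hm
  rw [phi_eq_ediv_emod]
  unfold supportLine
  set q := k / m
  set r := k % m
  rw [← hk]
  rcases he with rfl | rfl <;> split_ifs with hlow
  · linear_combination int_quadratic_nonneg (a := m) (x := 2 * r + j - 2 * m) (c := m - r - j)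
      (by omega) (by omega) (abs_le.mpr ⟨by omega, by omega⟩) (q - p + 1)
  · linear_combination int_quadratic_nonneg (a := m) (x := 2 * r + j - 2 * m) (c := 0)
      le_rfl (by omega) (abs_le.mpr ⟨by omega, by omega⟩) (q - p + 1)
  · linear_combination int_quadratic_nonneg (a := m) (x := 2 * r + j - m) (c := 0)
      le_rfl (by omega) (abs_le.mpr ⟨by omega, by omega⟩) (q - p)
  · linear_combination int_quadratic_nonneg (a := m) (x := 2 * r + j - m) (c := r + j - m)
      (by omega) (by omega) (abs_le.mpr ⟨by omega, by omega⟩) (q - p)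

lemma exists_neg_phi_eq_supportLine (hm : 0 < m) (hj0 : 0 ≤ j) (hjm : j ≤ m) (k : ℤ) :
    ∃ p e, (e = 0 ∨ e = 1) ∧ -phi m j k = supportLine m j p e k ∧
      m * (2 * p - 1) < 2 * k + j ∧ 2 * k + j < m * (2 * p + 2) := by
  have hk := Int.mul_ediv_add_emod k m
  have hr0 := Int.emod_nonneg k hm.ne'
  have hrm := Int.emod_lt_of_pos k hm
  rw [phi_eq_ediv_emod]
  unfold supportLine
  set q := k / m
  set r := k % m
  split_ifs with hlow
  · refine ⟨q, 1, Or.inr rfl, by linear_combination (q + 1) * hk, by linarith, by linarith⟩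
  · refine ⟨q + 1, 0, Or.inl rfl, by linear_combination (q + 2) * hk, by linarith, by linarith⟩

end

/-- For `m, u ≥ 1`, `0 ≤ j ≤ m`, `0 ≤ j' ≤ um`, `j' ≡ j (mod 2)`, the function
`N(n) = −φ(m,j,(j'−j)/2 − n(um+2)) + u·n·(j' + 1 − n(um+2))` attains its minimum
over `n ∈ ℤ` at `n = 0`. -/
theorem N_min_at_zero (m u j j' : ℤ) (hm : 1 ≤ m) (hu : 1 ≤ u)
    (hj0 : 0 ≤ j) (hjm : j ≤ m) (hj'0 : 0 ≤ j') (hj'um : j' ≤ u * m)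
    (hpar : 2 ∣ j' - j) :
    ∀ n : ℤ,
      -phi m j ((j' - j) / 2) ≤
        -phi m j ((j' - j) / 2 - n * (u * m + 2)) + u * n * (j' + 1 - n * (u * m + 2)) := by
  intro n
  set K := (j' - j) / 2
  have hK : 2 * K + j = j' := by omega
  obtain ⟨p, e, he, hphi, hlo, hhi⟩ := exists_neg_phi_eq_supportLine (by omega) hj0 hjm K
  have hp0 : 0 ≤ p := by nlinarith
  have hpu : 2 * p ≤ u := by nlinarith
  have hline := supportLine_le_neg_phi (by omega) hj0 hjm he (p - n * u) (K - n * (u * m + 2))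
  have hquad := int_quadratic_nonneg (a := 2 * u) (x := u - 2 * (2 * p + e)) le_rfl (by omega)
    (abs_le.mpr ⟨by omega, by omega⟩) n
  unfold supportLine at hline hphi
  rw [hphi]
  linear_combination hline + hquad + (n * u) * hK
end

section
/- Let m ≥ 1, u ≥ 1, j, j' be integers with 0 ≤ j ≤ m, 0 ≤ j' ≤ um, and j' ≡ j (mod 2). For n ∈ ℤ define N(n) = −φ(m,j,−(j'+j)/2 − 1 + n(um+2)) + u·n·(j' + 1 − n(um+2)). Then N, viewed as a function of n ∈ ℤ, attains its minimum at n = 0 or n = 1; i.e., N(n) ≥ min(N(0), N(1)) for every n ∈ ℤ. -/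
def phiDefect (m j r : ℤ) : ℤ :=
  if r ≤ m - j then r * (m - j - r) else (m - r) * (r - (m - j))

lemma mul_phi (m j k : ℤ) : m * phi m j k = -k ^ 2 - j * k - phiDefect m j (k % m) := by
  have hk : m * (k / m) + k % m = k := Int.mul_ediv_add_emod k m
  unfold phi phiDefect
  rw [show k.emod m = k % m from rfl, show k.ediv m = k / m from rfl]
  split_ifs <;> linear_combination (-(k + k % m + j)) * hk

section phiDefect

variable {m j : ℤ}

lemma phiDefect_zero (hjm : j ≤ m) : phiDefect m j 0 = 0 := by
  simp [phiDefect, hjm]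

lemma phiDefect_self (hj0 : 0 ≤ j) : phiDefect m j m = 0 := by
  unfold phiDefect
  split_ifs
  · obtain rfl : j = 0 := by omega
    ring
  · ring

lemma abs_phiDefect_sub_le (hj0 : 0 ≤ j) (hjm : j ≤ m) {r s : ℤ}
    (hr0 : 0 ≤ r) (hrm : r ≤ m) (hs0 : 0 ≤ s) (hsm : s ≤ m) :
    |phiDefect m j r - phiDefect m j s| ≤ m * |r - s| := by
  rw [abs_le, ← neg_mul]
  unfold phiDefect
  rcases le_total s r with hsr | hrs
  · rw [abs_of_nonneg (sub_nonneg.2 hsr)]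
    split_ifs <;> constructor <;> nlinarith
  · rw [abs_of_nonpos (sub_nonpos.2 hrs)]
    split_ifs <;> constructor <;> nlinarith

lemma abs_phiDefect_emod_add_two_sub_le (hm : 1 ≤ m) (hj0 : 0 ≤ j) (hjm : j ≤ m) (k : ℤ) :
    |phiDefect m j ((k + 2) % m) - phiDefect m j (k % m)| ≤ 2 * m := by
  have hr0 : 0 ≤ k % m := Int.emod_nonneg k (by omega)
  have hrm : k % m < m := Int.emod_lt_of_pos k (by omega)
  have hr'0 : 0 ≤ (k + 2) % m := Int.emod_nonneg _ (by omega)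
  have hr'm : (k + 2) % m < m := Int.emod_lt_of_pos _ (by omega)
  have lip := fun {r s : ℤ} => abs_phiDefect_sub_le (m := m) (r := r) (s := s) hj0 hjm
  rw [← Int.emod_add_emod] at hr'0 hr'm ⊢
  set r := k % m
  rcases lt_or_ge (r + 2) m with hlt | hge
  · rw [Int.emod_eq_of_lt (by omega) hlt]
    calc _ ≤ m * |r + 2 - r| := lip (by omega) (by omega) hr0 hrm.le
      _ = 2 * m := by norm_num [mul_comm]
  · -- across the wrap-around, compare `(r + 2) % m` with `0` and `r` with `m`
    have hwrap : (r + 2) % m ≤ r + 2 - m := by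
      rw [← Int.sub_emod_right]
      have := Int.mul_ediv_add_emod (r + 2 - m) m
      have := Int.ediv_nonneg (a := r + 2 - m) (by omega) (by omega : (0 : ℤ) ≤ m)
      nlinarith
    have h1 := lip hr'0 hr'm.le (le_refl 0) (by omega)
    have h2 := lip (by omega) le_rfl hr0 hrm.le
    simp only [phiDefect_zero hjm, phiDefect_self hj0, sub_zero, zero_sub, abs_neg] at h1 h2
    rw [abs_of_nonneg hr'0] at h1
    rw [abs_of_nonneg (by omega : (0 : ℤ) ≤ m - r)] at h2
    calc _ ≤ |phiDefect m j ((r + 2) % m)| + |phiDefect m j r| := abs_sub _ _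
      _ ≤ m * ((r + 2) % m) + m * (m - r) := add_le_add h1 h2
      _ ≤ m * (r + 2 - m) + m * (m - r) := by gcongr
      _ = 2 * m := by ring

end phiDefect

def weightIndex (m u j j' n : ℤ) : ℤ := -((j' + j) / 2) - 1 + n * (u * m + 2)

def N (m u j j' n : ℤ) : ℤ :=
  -phi m j (weightIndex m u j j' n) + u * n * (j' + 1 - n * (u * m + 2))

section N

variable {m u j j' : ℤ}

lemma weightIndex_add_one (n : ℤ) :
    weightIndex m u j j' (n + 1) = weightIndex m u j j' n + 2 + u * m := by
  unfold weightIndex; ring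

lemma mul_N_add_one_sub (hpar : 2 ∣ j' - j) (n : ℤ) :
    m * (N m u j j' (n + 1) - N m u j j' n) =
      2 * (2 * n + 1) * (u * m + 2) - (u * m + 2 * j' + 4) +
        (phiDefect m j ((weightIndex m u j j' n + 2) % m) -
          phiDefect m j (weightIndex m u j j' n % m)) := by
  have hhalf : 2 * ((j' + j) / 2) = j' + j :=
    Int.mul_ediv_cancel' (by omega)
  have hnext := mul_phi m j (weightIndex m u j j' (n + 1))
  rw [weightIndex_add_one, Int.add_mul_emod_self_right] at hnext
  have hcur := mul_phi m j (weightIndex m u j j' n)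
  unfold N
  rw [weightIndex_add_one]
  unfold weightIndex at *
  linear_combination hcur - hnext - (u * m + 2) * hhalf

lemma N_monotoneOn (hm : 1 ≤ m) (hu : 1 ≤ u) (hj0 : 0 ≤ j) (hjm : j ≤ m) (hj'um : j' ≤ u * m)
    (hpar : 2 ∣ j' - j) : MonotoneOn (N m u j j') (Set.Ici 1) := by
  refine monotoneOn_of_le_add_one Set.ordConnected_Ici fun n _ (hn : 1 ≤ n) _ ↦ ?_
  have hstep := mul_N_add_one_sub (m := m) (u := u) hpar n
  have hdefect := (abs_le.1 (abs_phiDefect_emod_add_two_sub_le hm hj0 hjm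
    (weightIndex m u j j' n))).1
  have hquad : 2 * m ≤ 2 * (2 * n + 1) * (u * m + 2) - (u * m + 2 * j' + 4) := by
    nlinarith [mul_le_mul_of_nonneg_right hu (by omega : (0 : ℤ) ≤ m)]
  have hmul : 0 ≤ m * (N m u j j' (n + 1) - N m u j j' n) := by linarith
  exact sub_nonneg.1 (nonneg_of_mul_nonneg_right hmul (by omega))

lemma N_antitoneOn (hm : 1 ≤ m) (hu : 1 ≤ u) (hj0 : 0 ≤ j) (hjm : j ≤ m) (hj'0 : 0 ≤ j')
    (hpar : 2 ∣ j' - j) : AntitoneOn (N m u j j') (Set.Iic 0) := by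
  refine antitoneOn_of_add_one_le Set.ordConnected_Iic fun n _ _ (hn : n + 1 ≤ 0) ↦ ?_
  have hstep := mul_N_add_one_sub (m := m) (u := u) hpar n
  have hdefect := (abs_le.1 (abs_phiDefect_emod_add_two_sub_le hm hj0 hjm
    (weightIndex m u j j' n))).2
  have hquad : 2 * (2 * n + 1) * (u * m + 2) - (u * m + 2 * j' + 4) ≤ -(2 * m) := by
    nlinarith [mul_le_mul_of_nonneg_right hu (by omega : (0 : ℤ) ≤ m)]
  have hmul : m * (N m u j j' (n + 1) - N m u j j' n) ≤ 0 := by linarith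
  exact sub_nonpos.1 (nonpos_of_mul_nonpos_right hmul (by omega))

end N

/-- For `m, u ≥ 1`, `0 ≤ j ≤ m`, `0 ≤ j' ≤ um`, `j' ≡ j (mod 2)`, the function
`N(n) = −φ(m,j,−(j'+j)/2 − 1 + n(um+2)) + u·n·(j' + 1 − n(um+2))` attains its
minimum over `n ∈ ℤ` at `n = 0` or `n = 1`. -/
theorem N_min_at_zero_or_one (m u j j' : ℤ) (hm : 1 ≤ m) (hu : 1 ≤ u)
    (hj0 : 0 ≤ j) (hjm : j ≤ m) (hj'0 : 0 ≤ j') (hj'um : j' ≤ u * m)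
    (hpar : 2 ∣ j' - j) :
    ∀ n : ℤ,
      min (-phi m j (-((j' + j) / 2) - 1))
          (-phi m j (-((j' + j) / 2) - 1 + (u * m + 2)) + u * (j' + 1 - (u * m + 2))) ≤
        -phi m j (-((j' + j) / 2) - 1 + n * (u * m + 2))
          + u * n * (j' + 1 - n * (u * m + 2)) := by
  intro n
  have hN0 : N m u j j' 0 = -phi m j (-((j' + j) / 2) - 1) := by simp [N, weightIndex]
  have hN1 : N m u j j' 1 =
      -phi m j (-((j' + j) / 2) - 1 + (u * m + 2)) + u * (j' + 1 - (u * m + 2)) := by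
    simp [N, weightIndex]
  change _ ≤ N m u j j' n
  rw [← hN0, ← hN1]
  rcases le_or_gt 1 n with hn | hn
  · exact min_le_of_right_le <|
      N_monotoneOn hm hu hj0 hjm hj'um hpar Set.self_mem_Ici hn hn
  · exact min_le_of_left_le <|
      N_antitoneOn hm hu hj0 hjm hj'0 hpar (Set.mem_Iic.2 (by omega)) Set.self_mem_Iic (by omega)
end

section
/- Let m ≥ 1, u ≥ 1, j, j' be integers with 0 ≤ j ≤ m, 0 ≤ j' ≤ um, and j' ≡ j (mod 2). Then −φ(m,j,−(j'+j)/2 − 1 + (um+2)) + u(j' + 1 − (um+2)) = u − φ(m,j,−(j'+j)/2 + 1). -/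
/-- Shifting `k` by `u * m` keeps the remainder `r` and raises the quotient `q` by `u`, so only
the quadratic part of `φ` changes. -/
theorem phi_add_mul_self {m : ℤ} (hm : m ≠ 0) (j k u : ℤ) :
    phi m j (k + u * m) = phi m j k - u * (2 * k + u * m + j) := by
  have hdiv : (k + u * m).ediv m = k.ediv m + u := Int.add_mul_ediv_right k u hm
  have hmod : (k + u * m).emod m = k.emod m := Int.add_mul_emod_self_right k u m
  have hk : m * k.ediv m + k.emod m = k := Int.mul_ediv_add_emod k m
  unfold phi
  rw [hdiv, hmod]
  linear_combination -u * hk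

theorem N_one_closed_form_general (m u j j' : ℤ) (hm : 1 ≤ m)
    (hpar : 2 ∣ j' - j) :
    -phi m j (-((j' + j) / 2) - 1 + (u * m + 2)) + u * (j' + 1 - (u * m + 2)) =
      u - phi m j (-((j' + j) / 2) + 1) := by
  have hhalf : 2 * ((j' + j) / 2) = j' + j := by omega
  have hshift : -((j' + j) / 2) - 1 + (u * m + 2) = (-((j' + j) / 2) + 1) + u * m := by ring
  rw [hshift, phi_add_mul_self (by omega : m ≠ 0)]
  linear_combination -u * hhalf

/-- Closed form of the exponent `N(1)`: for `m, u ≥ 1`, `0 ≤ j ≤ m`, `0 ≤ j' ≤ um`,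
`j' ≡ j (mod 2)`, one has
`−φ(m,j,−(j'+j)/2 − 1 + (um+2)) + u(j' + 1 − (um+2)) = u − φ(m,j,−(j'+j)/2 + 1)`. -/
theorem N_one_closed_form (m u j j' : ℤ) (hm : 1 ≤ m) (hu : 1 ≤ u)
    (hj0 : 0 ≤ j) (hjm : j ≤ m) (hj'0 : 0 ≤ j') (hj'um : j' ≤ u * m)
    (hpar : 2 ∣ j' - j) :
    -phi m j (-((j' + j) / 2) - 1 + (u * m + 2)) + u * (j' + 1 - (u * m + 2)) =
      u - phi m j (-((j' + j) / 2) + 1) :=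
  N_one_closed_form_general m u j j' hm hpar
end

section
/- Let m ≥ 1, u ≥ 1, j, j' be integers with 0 ≤ j ≤ m, 0 ≤ j' ≤ um, and j' ≡ j (mod 2). Then −φ(m,j,(j'−j)/2) ≤ min( −φ(m,j,−(j'+j)/2 − 1), u − φ(m,j,−(j'+j)/2 + 1) ). -/
/-!
Put `k = (j' - j) / 2`. The function `φ(m,j,·)` is symmetric about `-j/2`, i.e.
`φ(m,j,-k-j) = φ(m,j,k)`, so the two arguments on the right are the reflections of `k + 1` and
`k - 1`. Its backward difference is `φ(m,j,k) - φ(m,j,k+1) = 2⌊k/m⌋ + 1 + [k mod m ≥ m - j]`;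
this is `≥ 0` as soon as `2k + j = j' ≥ 0`, and its value at `k - 1` is `≤ u` as soon as
`2k + j = j' ≤ um`.
-/

section

variable {m j : ℤ}

lemma phi_mul_add (hm : 0 < m) (q : ℤ) {r : ℤ} (hr0 : 0 ≤ r) (hrm : r < m) :
    phi m j (m * q + r) =
      -q * (m * q + r + r + j) + (if r ≤ m - j then -r else m - j - 2 * r) := by
  obtain ⟨hq, hr⟩ := (Int.ediv_emod_unique hm).2 ⟨add_comm r (m * q), hr0, hrm⟩
  have hq' : (m * q + r).ediv m = q := hq
  have hr' : (m * q + r).emod m = r := hr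
  simp only [phi, hq', hr']

lemma phi_neg_sub (hm : 0 < m) (hj0 : 0 ≤ j) (hjm : j ≤ m) (k : ℤ) :
    phi m j (-k - j) = phi m j k := by
  have hk := Int.mul_ediv_add_emod k m
  have hr0 := Int.emod_nonneg k hm.ne'
  have hrm := Int.emod_lt_of_pos k hm
  generalize k / m = q, k % m = r at *
  subst hk
  rw [phi_mul_add hm q hr0 hrm]
  rcases (show r + j = 0 ∨ 0 < r + j ∧ r + j ≤ m ∨ m < r + j by omega) with h | h | h
  · obtain ⟨rfl, rfl⟩ : r = 0 ∧ j = 0 := by omega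
    rw [show -(m * q + 0) - 0 = m * -q + 0 by ring, phi_mul_add hm _ le_rfl hm]
    split_ifs <;> linarith
  · rw [show -(m * q + r) - j = m * (-q - 1) + (m - r - j) by ring,
      phi_mul_add hm _ (by omega) (by omega)]
    split_ifs <;> linarith
  · rw [show -(m * q + r) - j = m * (-q - 2) + (2 * m - r - j) by ring,
      phi_mul_add hm _ (by omega) (by omega)]
    split_ifs <;> linarith

lemma phi_sub_phi_add_one (hm : 0 < m) (hj0 : 0 ≤ j) (hjm : j ≤ m) (k : ℤ) :
    phi m j k - phi m j (k + 1) = 2 * (k / m) + 1 + if m - j ≤ k % m then 1 else 0 := by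
  have hk := Int.mul_ediv_add_emod k m
  have hr0 := Int.emod_nonneg k hm.ne'
  have hrm := Int.emod_lt_of_pos k hm
  generalize k / m = q, k % m = r at *
  subst hk
  rcases lt_or_eq_of_le (show r + 1 ≤ m by omega) with hr1 | hr1
  · rw [add_assoc, phi_mul_add hm q hr0 hrm, phi_mul_add hm q (by omega) hr1]
    split_ifs <;> linarith
  · obtain rfl : r = m - 1 := by omega
    rw [show m * q + (m - 1) + 1 = m * (q + 1) + 0 by ring,
      phi_mul_add hm q hr0 hrm, phi_mul_add hm (q + 1) le_rfl hm]
    split_ifs <;> linarith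

lemma phi_add_one_le (hm : 0 < m) (hj0 : 0 ≤ j) (hjm : j ≤ m) {k : ℤ} (hk : 0 ≤ 2 * k + j) :
    phi m j (k + 1) ≤ phi m j k := by
  have hstep := phi_sub_phi_add_one hm hj0 hjm k
  have hk' := Int.mul_ediv_add_emod k m
  have hrm := Int.emod_lt_of_pos k hm
  generalize k / m = q, k % m = r at *
  have hq : -1 ≤ q := by
    by_contra! h
    have : m * q ≤ m * -2 := mul_le_mul_of_nonneg_left (by omega) hm.le
    omega
  have hr : q = -1 → m - j ≤ r := by rintro rfl; omega
  split_ifs at hstep <;> omega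

lemma phi_sub_one_le (hm : 0 < m) (hj0 : 0 ≤ j) (hjm : j ≤ m) {k u : ℤ}
    (hk : 2 * k + j ≤ u * m) : phi m j (k - 1) ≤ phi m j k + u := by
  have hstep := phi_sub_phi_add_one hm hj0 hjm (k - 1)
  have hk' := Int.mul_ediv_add_emod (k - 1) m
  have hr0 := Int.emod_nonneg (k - 1) hm.ne'
  rw [sub_add_cancel] at hstep
  generalize (k - 1) / m = q, (k - 1) % m = r at *
  split_ifs at hstep with hr
  · have : m * (2 * q + 1) < m * u := by linarith
    have := lt_of_mul_lt_mul_left this hm.le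
    omega
  · have : m * (2 * q) < m * u := by linarith
    have := lt_of_mul_lt_mul_left this hm.le
    omega

end

theorem phi_min_inequality_general (m u j j' : ℤ) (hm : 1 ≤ m)
    (hj0 : 0 ≤ j) (hjm : j ≤ m) (hj'0 : 0 ≤ j') (hj'um : j' ≤ u * m)
    (hpar : 2 ∣ j' - j) :
    -phi m j ((j' - j) / 2) ≤
      min (-phi m j (-((j' + j) / 2) - 1)) (u - phi m j (-((j' + j) / 2) + 1)) := by
  obtain ⟨k, hk⟩ := hpar
  rw [show (j' - j) / 2 = k by omega, show -((j' + j) / 2) - 1 = -(k + 1) - j by omega,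
    show -((j' + j) / 2) + 1 = -(k - 1) - j by omega, phi_neg_sub hm hj0 hjm,
    phi_neg_sub hm hj0 hjm]
  refine le_min (neg_le_neg (phi_add_one_le hm hj0 hjm (by omega))) ?_
  linarith [phi_sub_one_le hm hj0 hjm (k := k) (u := u) (by omega)]

/-- For `m, u ≥ 1`, `0 ≤ j ≤ m`, `0 ≤ j' ≤ um`, `j' ≡ j (mod 2)`:
`−φ(m,j,(j'−j)/2) ≤ min(−φ(m,j,−(j'+j)/2 − 1), u − φ(m,j,−(j'+j)/2 + 1))`. -/
theorem phi_min_inequality (m u j j' : ℤ) (hm : 1 ≤ m) (hu : 1 ≤ u)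
    (hj0 : 0 ≤ j) (hjm : j ≤ m) (hj'0 : 0 ≤ j') (hj'um : j' ≤ u * m)
    (hpar : 2 ∣ j' - j) :
    -phi m j ((j' - j) / 2) ≤
      min (-phi m j (-((j' + j) / 2) - 1)) (u - phi m j (-((j' + j) / 2) + 1)) :=
  phi_min_inequality_general m u j j' hm hj0 hjm hj'0 hj'um hpar
end

section
/- For all integers m ≥ 1, j with 0 ≤ j ≤ m/2, and all k ∈ (1/2)ℤ, one has ψ(m,j,−(j+k)) = ψ(m,j,k). -/
open Classical in
/-- The δ-coefficient function `ψ(m,j,k)` for type `A₂⁽²⁾`, for half-integer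
arguments `k ∈ (1/2)ℤ`: writing `k = (m/2)*q + r` with `q ∈ ℤ` and `0 ≤ r < m/2`
(so `q = ⌊2k/m⌋` when `1 ≤ m`), set `ψ(m,j,k) = -q*(k+r+j) + c(r)` where
`c(r) = -r` if `0 ≤ r ≤ m/2 - j`; `c(r) = m/2 - j - 2r` if `m/2 - j ≤ r < m/2`
and `r - m/2 ∈ ℤ`; `c(r) = (m-1)/2 - j - 2r` if `(m-1)/2 - j ≤ r < m/2` and
`r - (m-1)/2 ∈ ℤ` (these expressions agree on overlaps). -/
noncomputable def psi (m j : ℤ) (k : ℚ) : ℚ :=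
  let q : ℤ := ⌊2 * k / (m : ℚ)⌋
  let r : ℚ := k - (m : ℚ) / 2 * (q : ℚ)
  (-(q : ℚ)) * (k + r + (j : ℚ)) +
    (if r ≤ (m : ℚ) / 2 - (j : ℚ) then -r
     else if ∃ t : ℤ, r - (m : ℚ) / 2 = (t : ℚ) then (m : ℚ) / 2 - (j : ℚ) - 2 * r
     else ((m : ℚ) - 1) / 2 - (j : ℚ) - 2 * r)

/-- `k` lies in the half-integer lattice `(1/2)ℤ`. -/
def IsHalfInt (k : ℚ) : Prop := ∃ t : ℤ, 2 * k = (t : ℚ)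


/-!
Write `k = (m/2) q + r` with `0 ≤ r < m/2`. Then `-(j + k) = (m/2) q' + r'` with
`(q', r') = (-q, 0)`, `(-q - 1, m/2 - j - r)` or `(-q - 2, m - j - r)` according as
`j + r = 0`, `0 < j + r ≤ m/2` or `m/2 < j + r` (here `0 ≤ j ≤ m/2` is what keeps `r'` in
`[0, m/2)`). In the first two cases both `r` and `r'` lie in the range where `c(ρ) = -ρ`;
in the third both lie above `m/2 - j`, and `r' - m/2 = -(r - m/2) - j` is an integer exactly
when `r - m/2` is, so `c` takes the same branch at `r` and `r'`. Each case is then a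
polynomial identity in `q`, `r`, `j`, `m`.
-/

open Classical in
/-- The term `c(r)` in the definition of `ψ`. -/
noncomputable def psiCorrection (m j : ℤ) (r : ℚ) : ℚ :=
  if r ≤ (m : ℚ) / 2 - (j : ℚ) then -r
  else if ∃ t : ℤ, r - (m : ℚ) / 2 = (t : ℚ) then (m : ℚ) / 2 - (j : ℚ) - 2 * r
  else ((m : ℚ) - 1) / 2 - (j : ℚ) - 2 * r

section

variable {m : ℤ} (j : ℤ) {r : ℚ}

theorem psiCorrection_of_le (h : r ≤ (m : ℚ) / 2 - j) : psiCorrection m j r = -r :=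
  if_pos h

theorem psiCorrection_sub_sub (h : (m : ℚ) / 2 - j < r) (h' : r < (m : ℚ) / 2) :
    psiCorrection m j (m - j - r) = psiCorrection m j r + 2 * (2 * r + j - m) := by
  have hshift : (∃ t : ℤ, (m - j - r) - (m : ℚ) / 2 = t) ↔ ∃ t : ℤ, r - (m : ℚ) / 2 = t :=
    ⟨fun ⟨t, ht⟩ => ⟨-t - j, by push_cast; linarith⟩,
      fun ⟨t, ht⟩ => ⟨-t - j, by push_cast; linarith⟩⟩
  simp only [psiCorrection, hshift]
  split_ifs <;> first | linarith | tauto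

theorem exists_eq_half_mul_add (hm : 0 < m) (k : ℚ) :
    ∃ (q : ℤ) (r : ℚ), 0 ≤ r ∧ r < (m : ℚ) / 2 ∧ k = (m : ℚ) / 2 * q + r := by
  have hm' : (0 : ℚ) < m / 2 := by positivity
  refine ⟨⌊2 * k / m⌋, m / 2 * Int.fract (2 * k / m), mul_nonneg hm'.le (Int.fract_nonneg _),
    mul_lt_of_lt_one_right hm' (Int.fract_lt_one _), ?_⟩
  rw [← mul_add, Int.floor_add_fract]
  field_simp

theorem floor_two_mul_half_mul_add_div (hm : 0 < m) (q : ℤ) (hr0 : 0 ≤ r)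
    (hr : r < (m : ℚ) / 2) : ⌊2 * ((m : ℚ) / 2 * q + r) / m⌋ = q := by
  have hmq : (0 : ℚ) < m := by exact_mod_cast hm
  have hsplit : 2 * ((m : ℚ) / 2 * q + r) / m = q + 2 * r / m := by
    field_simp
  rw [hsplit, Int.floor_intCast_add, Int.floor_eq_zero_iff.mpr, add_zero]
  exact ⟨by positivity, by rw [div_lt_one hmq]; linarith⟩

theorem psi_half_mul_add (hm : 0 < m) (q : ℤ) (hr0 : 0 ≤ r) (hr : r < (m : ℚ) / 2) :
    psi m j ((m : ℚ) / 2 * q + r) =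
      -q * ((m : ℚ) / 2 * q + 2 * r + j) + psiCorrection m j r := by
  rw [psi, floor_two_mul_half_mul_add_div hm q hr0 hr, add_sub_cancel_left, psiCorrection]
  ring

theorem psi_neg_add_half_mul_add (hm : 0 < m) (hj0 : 0 ≤ j) (hjm : 2 * j ≤ m) (q : ℤ)
    (hr0 : 0 ≤ r) (hr : r < (m : ℚ) / 2) :
    psi m j (-(j + ((m : ℚ) / 2 * q + r))) = psi m j ((m : ℚ) / 2 * q + r) := by
  have hjq : (0 : ℚ) ≤ j := by exact_mod_cast hj0
  have hjmq : 2 * (j : ℚ) ≤ m := by exact_mod_cast hjm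
  rw [psi_half_mul_add j hm q hr0 hr]
  rcases (add_nonneg hjq hr0).eq_or_lt with hzero | hpos
  · obtain rfl : j = 0 := by exact_mod_cast (by linarith : (j : ℚ) = 0)
    obtain rfl : r = 0 := by linarith
    rw [show -(((0 : ℤ) : ℚ) + ((m : ℚ) / 2 * q + 0))
          = (m : ℚ) / 2 * ((-q : ℤ) : ℚ) + 0 by push_cast; ring,
      psi_half_mul_add 0 hm (-q) le_rfl hr]
    push_cast
    ring
  by_cases hlow : (j : ℚ) + r ≤ (m : ℚ) / 2
  · rw [show -((j : ℚ) + ((m : ℚ) / 2 * q + r))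
          = (m : ℚ) / 2 * ((-q - 1 : ℤ) : ℚ) + (m / 2 - j - r) by push_cast; ring,
      psi_half_mul_add j hm _ (by linarith) (by linarith),
      psiCorrection_of_le j (by linarith), psiCorrection_of_le j (by linarith)]
    push_cast
    ring
  · rw [show -((j : ℚ) + ((m : ℚ) / 2 * q + r))
          = (m : ℚ) / 2 * ((-q - 2 : ℤ) : ℚ) + (m - j - r) by push_cast; ring,
      psi_half_mul_add j hm _ (by linarith) (by linarith),
      psiCorrection_sub_sub j (by linarith) hr]
    push_cast
    ring

end

theorem psi_reflection_general (m j : ℤ) (hm : 1 ≤ m) (hj0 : 0 ≤ j) (hjm : 2 * j ≤ m)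
    (k : ℚ) :
    psi m j (-((j : ℚ) + k)) = psi m j k := by
  obtain ⟨q, r, hr0, hr, rfl⟩ := exists_eq_half_mul_add (by omega : 0 < m) k
  exact psi_neg_add_half_mul_add j (by omega) hj0 hjm q hr0 hr

/-- For all integers `m ≥ 1`, `0 ≤ j ≤ m/2`, and all `k ∈ (1/2)ℤ`,
one has `ψ(m,j,−(j+k)) = ψ(m,j,k)`. -/
theorem psi_reflection (m j : ℤ) (hm : 1 ≤ m) (hj0 : 0 ≤ j) (hjm : 2 * j ≤ m)
    (k : ℚ) (hk : IsHalfInt k) :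
    psi m j (-((j : ℚ) + k)) = psi m j k :=
  psi_reflection_general m j hm hj0 hjm k
end

section
/- Let m ≥ 1 be an integer, u ≥ 1 an odd integer, and j, j' integers with 0 ≤ j ≤ m/2 and 0 ≤ j' ≤ um/2. For n ∈ ℤ define N(n) = −ψ(m,j,(j'−j)/2 − n(um+3)/2) + u·n·(j' + 1 − n(um+3)/2). Then N, viewed as a function of n ∈ ℤ, attains its minimum at n = 0; i.e., N(n) ≥ N(0) for every n ∈ ℤ. -/
/-! For `S ∈ ℤ`, `-2m·ψ(m, j, S/2)` is the integer
`psiNum m j S = S² + 2jS + psiCorr m j (S % m)`. As a function of `S` this is `m` times a convex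
piecewise-linear function with integer slopes, up to a parity defect of at most `m`, and
replacing `S` by `S + mk` adds the explicit quadratic `mk(2S + mk + 2j)`. With `S₀ = j' - j` this
quadratic absorbs the term `u·n·(j' + 1 - …)`, and `N(n) ≥ N(0)` becomes
`psiNum S₀ ≤ psiNum (S₀ - 3n) + m·u·n(3n + 2)`. The supporting line of `psiNum` at `S₀` has
slope `m·σ` with `0 ≤ σ ≤ u`, because `-j ≤ S₀` and `2(S₀ + j) ≤ um` with `u` odd. Moving along
it by `-3n` costs at most `3mun + m` for `n > 0` and at most `m` for `n < 0`, both below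
`m·u·n(3n + 2)`. -/

def psiCorr (m j R : ℤ) : ℤ :=
  if R ≤ m - 2 * j then R * (m - 2 * j - R)
  else if Even (R - m) then (m - R) * (R - (m - 2 * j))
  else (m - R) * (R - (m - 2 * j)) + m

def psiNum (m j S : ℤ) : ℤ := S ^ 2 + 2 * j * S + psiCorr m j (S % m)

def psiSlope (m j S : ℤ) : ℤ :=
  if S % m ≤ m - 2 * j then 2 * (S / m) + 1 else 2 * (S / m) + 2

section

variable {m j : ℤ}

lemma psiCorr_nonneg (hm : 0 < m) {R : ℤ} (hR0 : 0 ≤ R) (hRm : R < m) :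
    0 ≤ psiCorr m j R := by
  unfold psiCorr
  split_ifs
  · exact mul_nonneg hR0 (by omega)
  · exact mul_nonneg (by omega) (by omega)
  · exact add_nonneg (mul_nonneg (by omega) (by omega)) hm.le

lemma psiCorr_le_upper_parabola (hm : 0 ≤ m) {R : ℤ} (hR : m - 2 * j < R) :
    psiCorr m j R ≤ (m - R) * (R - (m - 2 * j)) + m := by
  rw [psiCorr, if_neg (by omega)]
  split_ifs <;> omega

lemma psiNum_add_mul (S k : ℤ) :
    psiNum m j (S + m * k) = psiNum m j S + m * k * (2 * S + m * k + 2 * j) := by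
  rw [psiNum, psiNum, Int.add_mul_emod_self_left]
  ring

variable (hm : 0 < m) (hj0 : 0 ≤ j) (hjm : 2 * j ≤ m)
include hm hj0 hjm

/- Each parabola is `≤ 0` outside the window of residues on which it is a branch of
`psiCorr`, so it bounds `psiCorr` at every integer, not only at residues. -/
lemma lower_parabola_le_psiCorr (x : ℤ) : x * (m - 2 * j - x) ≤ psiCorr m j (x % m) := by
  have hcorr := psiCorr_nonneg (j := j) hm (Int.emod_nonneg x hm.ne') (Int.emod_lt_of_pos x hm)
  rcases le_or_gt x 0 with hx | hx
  · exact (mul_nonpos_of_nonpos_of_nonneg hx (by omega)).trans hcorr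
  rcases le_or_gt (m - 2 * j) x with hx' | hx'
  · exact (mul_nonpos_of_nonneg_of_nonpos (by omega) (by omega)).trans hcorr
  · rw [Int.emod_eq_of_lt hx.le (by omega), psiCorr, if_pos hx'.le]

lemma upper_parabola_le_psiCorr (x : ℤ) :
    (m - x) * (x - (m - 2 * j)) ≤ psiCorr m j (x % m) := by
  have hcorr := psiCorr_nonneg (j := j) hm (Int.emod_nonneg x hm.ne') (Int.emod_lt_of_pos x hm)
  rcases le_or_gt x (m - 2 * j) with hx | hx
  · exact (mul_nonpos_of_nonneg_of_nonpos (by omega) (by omega)).trans hcorr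
  rcases le_or_gt m x with hx' | hx'
  · exact (mul_nonpos_of_nonpos_of_nonneg (by omega) (by omega)).trans hcorr
  · rw [Int.emod_eq_of_lt (by omega) hx', psiCorr, if_neg (by omega)]
    split_ifs <;> omega

lemma psiNum_support (S T : ℤ) :
    psiNum m j S + m * psiSlope m j S * (T - S) ≤ psiNum m j T + m := by
  obtain ⟨q, R, hR0, hRm, rfl⟩ : ∃ q R, 0 ≤ R ∧ R < m ∧ S = m * q + R :=
    ⟨S / m, S % m, Int.emod_nonneg S hm.ne', Int.emod_lt_of_pos S hm,
      (Int.mul_ediv_add_emod S m).symm⟩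
  have hmod : (m * q + R) % m = R := by
    rw [add_comm, Int.add_mul_emod_self_left, Int.emod_eq_of_lt hR0 hRm]
  have hdiv : (m * q + R) / m = q := by
    rw [add_comm, Int.add_mul_ediv_left _ _ hm.ne', Int.ediv_eq_zero_of_lt hR0 hRm, zero_add]
  have hT : (T - m * q) % m = T % m := Int.sub_mul_emod_self_left T m q
  rw [psiSlope, hmod, hdiv]
  unfold psiNum
  rw [hmod]
  split_ifs with hlow
  · have hS : psiCorr m j R = R * (m - 2 * j - R) := if_pos hlow
    have hT' := lower_parabola_le_psiCorr hm hj0 hjm (T - m * q)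
    rw [hT] at hT'
    nlinarith
  · have hS := psiCorr_le_upper_parabola (j := j) (R := R) hm.le (by omega)
    have hT' := upper_parabola_le_psiCorr hm hj0 hjm (T - m * q)
    rw [hT] at hT'
    nlinarith

lemma psiSlope_le {u : ℤ} (hu : Odd u) {S : ℤ} (hS : 2 * (S + j) ≤ u * m) :
    psiSlope m j S ≤ u := by
  obtain ⟨a, rfl⟩ := hu
  have hq : S / m < a + 1 := (Int.ediv_lt_iff_lt_mul hm).2 (by nlinarith)
  have hSqR := Int.mul_ediv_add_emod S m
  have hR := Int.emod_lt_of_pos S hm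
  unfold psiSlope
  split_ifs with hlow
  · omega
  · rcases (show S / m = a ∨ S / m < a by omega) with hqa | hqa
    · rw [hqa] at hSqR
      nlinarith
    · omega

end

lemma psiSlope_nonneg {m j : ℤ} (hm : 0 < m) (hjm : 2 * j ≤ m) {S : ℤ} (hS : -j ≤ S) :
    0 ≤ psiSlope m j S := by
  have hq : -1 ≤ S / m := (Int.le_ediv_iff_mul_le hm).2 (by omega)
  have hSqR := Int.mul_ediv_add_emod S m
  have hR := Int.emod_lt_of_pos S hm
  unfold psiSlope
  split_ifs
  · rcases (show S / m = -1 ∨ 0 ≤ S / m by omega) with hq1 | hq0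
    · rw [hq1] at hSqR
      omega
    · omega
  · omega

lemma psiNum_le_shift {m j u j' : ℤ} (hm : 0 < m) (hu : 1 ≤ u) (huodd : Odd u) (hj0 : 0 ≤ j)
    (hjm : 2 * j ≤ m) (hj'0 : 0 ≤ j') (hj'um : 2 * j' ≤ u * m) (n : ℤ) :
    psiNum m j (j' - j) ≤
      psiNum m j (j' - j - n * (u * m + 3)) + m * u * n * (2 * (j' + 1) - n * (u * m + 3)) := by
  have hshift : psiNum m j (j' - j - n * (u * m + 3)) = psiNum m j (j' - j - 3 * n) +
      m * (-(n * u)) * (2 * (j' - j - 3 * n) + m * (-(n * u)) + 2 * j) := by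
    rw [← psiNum_add_mul]
    ring_nf
  have hsupp := psiNum_support hm hj0 hjm (j' - j) (j' - j - 3 * n)
  rw [hshift]
  rcases lt_trichotomy n 0 with hn | rfl | hn
  · have hslope : 0 ≤ m * psiSlope m j (j' - j) * -n :=
      mul_nonneg (mul_nonneg hm.le (psiSlope_nonneg hm hjm (by omega))) (by omega)
    have hquad : 0 ≤ m * (u * n * (3 * n + 2) - 1) :=
      mul_nonneg hm.le (by nlinarith [mul_pos (neg_pos.2 hn) (show 0 < -(3 * n + 2) by omega)])
    nlinarith
  · simp
  · have hslope : 0 ≤ m * n * (u - psiSlope m j (j' - j)) :=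
      mul_nonneg (mul_nonneg hm.le hn.le)
        (sub_nonneg.2 (psiSlope_le hm hj0 hjm huodd (S := j' - j) (by omega)))
    have hquad : 0 ≤ m * (u * n * (3 * n - 1) - 1) :=
      mul_nonneg hm.le (by nlinarith [mul_pos hn (show 0 < 3 * n - 1 by omega)])
    nlinarith

lemma psi_half_eq {m : ℤ} (hm : 0 < m) (j S : ℤ) :
    psi m j ((S : ℚ) / 2) = -(psiNum m j S : ℚ) / (2 * m) := by
  obtain ⟨q, R, hR0, hRm, rfl⟩ : ∃ q R, 0 ≤ R ∧ R < m ∧ S = m * q + R :=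
    ⟨S / m, S % m, Int.emod_nonneg S hm.ne', Int.emod_lt_of_pos S hm,
      (Int.mul_ediv_add_emod S m).symm⟩
  have hmod : (m * q + R) % m = R := by
    rw [add_comm, Int.add_mul_emod_self_left, Int.emod_eq_of_lt hR0 hRm]
  have hmQ : (0 : ℚ) < m := by exact_mod_cast hm
  have hR0Q : (0 : ℚ) ≤ R := by exact_mod_cast hR0
  have hRmQ : (R : ℚ) < m := by exact_mod_cast hRm
  have hfloor : ⌊2 * (((m * q + R : ℤ) : ℚ) / 2) / m⌋ = q := by
    rw [Int.floor_eq_iff]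
    push_cast
    constructor
    · rw [le_div_iff₀ hmQ]; nlinarith
    · rw [div_lt_iff₀ hmQ]; nlinarith
  have hr : ((m * q + R : ℤ) : ℚ) / 2 - m / 2 * q = R / 2 := by push_cast; ring
  have hlow : (R : ℚ) / 2 ≤ m / 2 - j ↔ R ≤ m - 2 * j := by
    rw [← Int.cast_le (R := ℚ)]
    push_cast
    constructor <;> intro h <;> linarith
  have hpar : (∃ t : ℤ, (R : ℚ) / 2 - m / 2 = t) ↔ Even (R - m) := by
    constructor
    · rintro ⟨t, ht⟩
      exact ⟨t, by exact_mod_cast (show ((R - m : ℤ) : ℚ) = t + t by push_cast; linarith)⟩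
    · rintro ⟨t, ht⟩
      refine ⟨t, ?_⟩
      have htQ : ((R - m : ℤ) : ℚ) = t + t := by exact_mod_cast ht
      push_cast at htQ
      linarith
  simp only [psi, hfloor, hr, hlow, hpar, psiNum, hmod, psiCorr]
  split_ifs <;> push_cast <;> field_simp <;> ring

/-- For `m ≥ 1`, `u ≥ 1` odd, `0 ≤ j ≤ m/2`, `0 ≤ j' ≤ um/2`, the function
`N(n) = −ψ(m,j,(j'−j)/2 − n(um+3)/2) + u·n·(j' + 1 − n(um+3)/2)` attains its
minimum over `n ∈ ℤ` at `n = 0`. -/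
theorem psi_N_min_at_zero (m u j j' : ℤ) (hm : 1 ≤ m) (hu : 1 ≤ u) (huodd : Odd u)
    (hj0 : 0 ≤ j) (hjm : 2 * j ≤ m) (hj'0 : 0 ≤ j') (hj'um : 2 * j' ≤ u * m) :
    ∀ n : ℤ,
      -psi m j (((j' : ℚ) - (j : ℚ)) / 2) ≤
        -psi m j (((j' : ℚ) - (j : ℚ)) / 2 - (n : ℚ) * ((u : ℚ) * (m : ℚ) + 3) / 2) +
          (u : ℚ) * (n : ℚ) * ((j' : ℚ) + 1 - (n : ℚ) * ((u : ℚ) * (m : ℚ) + 3) / 2) := by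
  intro n
  have hm0 : 0 < m := hm
  have hkey : (psiNum m j (j' - j) : ℚ) ≤ psiNum m j (j' - j - n * (u * m + 3)) +
      m * u * n * (2 * (j' + 1) - n * (u * m + 3)) := by
    exact_mod_cast psiNum_le_shift hm0 hu huodd hj0 hjm hj'0 hj'um n
  rw [show ((j' : ℚ) - j) / 2 = ((j' - j : ℤ) : ℚ) / 2 by push_cast; ring,
    show ((j' - j : ℤ) : ℚ) / 2 - n * (u * m + 3) / 2 =
      ((j' - j - n * (u * m + 3) : ℤ) : ℚ) / 2 by push_cast; ring,
    psi_half_eq hm0, psi_half_eq hm0, neg_div, neg_div, neg_neg, neg_neg,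
    div_add' _ _ _ (by positivity), div_le_div_iff_of_pos_right (by positivity)]
  linarith
end

section
/- Let m ≥ 1 be an integer, u ≥ 1 an odd integer, and j, j' integers with 0 ≤ j ≤ m/2 and 0 ≤ j' ≤ um/2. For n ∈ ℤ define N(n) = −ψ(m,j,−(j'+j)/2 − 1 + n(um+3)/2) + u·n·(j' + 1 − n(um+3)/2). Then N, viewed as a function of n ∈ ℤ, attains its minimum at n = 0 or n = 1; i.e., N(n) ≥ min(N(0), N(1)) for every n ∈ ℤ. -/
lemma min_zero_one_le_of_monotoneOn_of_antitoneOn {β : Type*} [LinearOrder β] {f : ℤ → β}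
    (hmono : MonotoneOn f (Set.Ici 1)) (hanti : AntitoneOn f (Set.Iic 0)) (n : ℤ) :
    min (f 0) (f 1) ≤ f n := by
  rcases le_or_gt 1 n with h | h
  · exact (min_le_right _ _).trans (hmono Set.self_mem_Ici h h)
  · have h : n ≤ 0 := by omega
    exact (min_le_left _ _).trans (hanti h Set.self_mem_Iic h)

/-- `-2 c(ρ/2)`, where `c` is the correction term in the definition of `psi`. -/
def negTwoC (m j ρ : ℤ) : ℤ :=
  if ρ + 2 * j ≤ m then ρ
  else 2 * ρ + 2 * j - m + if (m - ρ) % 2 = 0 then 0 else 1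

/-- `-2 ψ(m, j, x/2)`: the quotient of `x/2` by `m/2` is `x / m` and its remainder is `(x % m)/2`. -/
def negTwoPsi (m j x : ℤ) : ℤ :=
  m * (x / m) ^ 2 + 2 * (x / m) * (x % m + j) + negTwoC m j (x % m)

lemma negTwoC_cases (m j ρ : ℤ) :
    (ρ + 2 * j ≤ m ∧ negTwoC m j ρ = ρ) ∨
      (m < ρ + 2 * j ∧ 2 * ρ + 2 * j - m ≤ negTwoC m j ρ ∧
        negTwoC m j ρ ≤ 2 * ρ + 2 * j - m + 1) := by
  unfold negTwoC
  split_ifs <;> omega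

open Classical in
lemma psi_correction_eq_negTwoC (m j ρ : ℤ) :
    (if (ρ : ℚ) / 2 ≤ (m : ℚ) / 2 - j then -((ρ : ℚ) / 2)
     else if ∃ t : ℤ, (ρ : ℚ) / 2 - (m : ℚ) / 2 = t then (m : ℚ) / 2 - j - 2 * ((ρ : ℚ) / 2)
     else ((m : ℚ) - 1) / 2 - j - 2 * ((ρ : ℚ) / 2)) = -(negTwoC m j ρ : ℚ) / 2 := by
  have hpar : (∃ t : ℤ, (ρ : ℚ) / 2 - (m : ℚ) / 2 = t) ↔ (m - ρ) % 2 = 0 := by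
    constructor
    · rintro ⟨t, ht⟩
      have : ρ - m = 2 * t := by exact_mod_cast (by linarith : (ρ : ℚ) - m = 2 * t)
      omega
    · intro h
      obtain ⟨t, ht⟩ : ∃ t, ρ - m = 2 * t := ⟨(ρ - m) / 2, by omega⟩
      have ht : (ρ : ℚ) - m = 2 * t := by exact_mod_cast ht
      exact ⟨t, by linarith⟩
  have hle : (ρ : ℚ) / 2 ≤ (m : ℚ) / 2 - j ↔ ρ + 2 * j ≤ m := by
    rw [← Int.cast_le (R := ℚ)]; push_cast; constructor <;> intro h <;> linarith
  unfold negTwoC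
  simp only [hpar, hle]
  split_ifs <;> push_cast <;> ring

lemma psi_half (m j x : ℤ) (hm : 0 < m) :
    psi m j ((x : ℚ) / 2) = -(negTwoPsi m j x : ℚ) / 2 := by
  have hx : (x : ℚ) = m * (x / m : ℤ) + (x % m : ℤ) := by
    exact_mod_cast (Int.mul_ediv_add_emod x m).symm
  have hq : ⌊2 * ((x : ℚ) / 2) / m⌋ = x / m := by
    lift m to ℕ using hm.le
    rw [mul_div_cancel₀ _ two_ne_zero]
    exact_mod_cast Rat.floor_intCast_div_natCast x m
  have hr : (x : ℚ) / 2 - m / 2 * (x / m : ℤ) = (x % m : ℤ) / 2 := by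
    rw [hx]; ring
  simp only [psi]
  rw [hq, hr, psi_correction_eq_negTwoC, negTwoPsi]
  push_cast
  linear_combination (-(x / m : ℤ) / 2 : ℚ) * hx

lemma negTwoPsi_add_mul (m j x t : ℤ) (hm : m ≠ 0) :
    negTwoPsi m j (x + m * t) = negTwoPsi m j x + 2 * t * (x + j) + m * t ^ 2 := by
  unfold negTwoPsi
  rw [Int.add_mul_ediv_left x t hm, Int.add_mul_emod_self_left]
  linear_combination (2 * t) * Int.mul_ediv_add_emod x m

lemma negTwoPsi_add_three_sub_bounds (m j x : ℤ) (hm : 0 < m) (hj0 : 0 ≤ j) (hjm : 2 * j ≤ m) :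
    6 * (x / m) + 3 ≤ negTwoPsi m j (x + 3) - negTwoPsi m j x ∧
      negTwoPsi m j (x + 3) - negTwoPsi m j x ≤ 6 * (x / m) + 11 := by
  have hx := Int.mul_ediv_add_emod x m
  have hx3 := Int.mul_ediv_add_emod (x + 3) m
  have hρ := Int.emod_nonneg x hm.ne'
  have hρ' := Int.emod_nonneg (x + 3) hm.ne'
  have hρm := Int.emod_lt_of_pos x hm
  have hρm' := Int.emod_lt_of_pos (x + 3) hm
  have hC := negTwoC_cases m j (x % m)
  have hC' := negTwoC_cases m j ((x + 3) % m)
  unfold negTwoPsi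
  generalize x / m = q, x % m = ρ, (x + 3) / m = q', (x + 3) % m = ρ' at *
  obtain ⟨w, rfl⟩ : ∃ w, q' = q + w := ⟨q' - q, by ring⟩
  have hmw : m * w = ρ - ρ' + 3 := by linear_combination hx3 - hx
  have hw0 : 0 ≤ w := by nlinarith
  have hw3 : w ≤ 3 := by nlinarith
  have hdiff : m * (q + w) ^ 2 + 2 * (q + w) * (ρ' + j) + negTwoC m j ρ'
        - (m * q ^ 2 + 2 * q * (ρ + j) + negTwoC m j ρ)
      = 6 * q + w * (ρ + ρ' + 3 + 2 * j) + negTwoC m j ρ' - negTwoC m j ρ := by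
    linear_combination (2 * q + w) * hmw
  rw [hdiff]
  interval_cases w <;> omega

/-- `2N(n)` for `a = j' + j + 2`. -/
def twiceN (m u j a n : ℤ) : ℤ := u * (3 * n ^ 2 - 2 * n) + negTwoPsi m j (3 * n - a)

lemma twiceN_le_add_one (m u j a n : ℤ) (hm : 0 < m) (hu : 1 ≤ u) (hj0 : 0 ≤ j) (hjm : 2 * j ≤ m)
    (ha : 2 * a ≤ (u + 1) * m + 4) (hn : 1 ≤ n) : twiceN m u j a n ≤ twiceN m u j a (n + 1) := by
  set x := 3 * n - a
  have hstep := (negTwoPsi_add_three_sub_bounds m j x hm hj0 hjm).1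
  have hq : -3 * u - 6 ≤ 6 * (x / m) := by
    -- `m (2⌊x/m⌋ + u + 3) > 2x + (u + 1)m = 6n - 2a + (u + 1)m ≥ 2`
    have hpos : 0 < m * (2 * (x / m) + u + 3) := by
      nlinarith [Int.mul_ediv_add_emod x m, Int.emod_lt_of_pos x hm]
    have := pos_of_mul_pos_right hpos hm.le
    omega
  have hun : u ≤ u * n := by nlinarith
  rw [twiceN, twiceN, show 3 * (n + 1) - a = x + 3 by ring]
  linarith

lemma twiceN_add_one_le (m u j a n : ℤ) (hm : 0 < m) (hu : 1 ≤ u) (hj0 : 0 ≤ j) (hjm : 2 * j ≤ m)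
    (ha : 0 ≤ a) (hn : n + 1 ≤ 0) : twiceN m u j a (n + 1) ≤ twiceN m u j a n := by
  set x := 3 * n - a
  have hstep := (negTwoPsi_add_three_sub_bounds m j x hm hj0 hjm).2
  have hq : x / m < 0 := Int.ediv_neg_of_neg_of_pos (by omega) hm
  have hun : u ≤ u * -n := by nlinarith
  rw [twiceN, twiceN, show 3 * (n + 1) - a = x + 3 by ring]
  linarith

noncomputable def psiN (m u j j' n : ℤ) : ℚ :=
  -psi m j (-(((j' : ℚ) + (j : ℚ)) / 2) - 1 + (n : ℚ) * ((u : ℚ) * (m : ℚ) + 3) / 2) +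
    (u : ℚ) * (n : ℚ) * ((j' : ℚ) + 1 - (n : ℚ) * ((u : ℚ) * (m : ℚ) + 3) / 2)

lemma psiN_eq_twiceN_div_two (m u j j' n : ℤ) (hm : 0 < m) :
    psiN m u j j' n = (twiceN m u j (j' + j + 2) n : ℚ) / 2 := by
  have hk : -(((j' : ℚ) + j) / 2) - 1 + n * ((u : ℚ) * m + 3) / 2
      = ((3 * n - (j' + j + 2) + m * (n * u) : ℤ) : ℚ) / 2 := by
    push_cast; ring
  rw [psiN, hk, psi_half _ _ _ hm, negTwoPsi_add_mul _ _ _ _ hm.ne', twiceN]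
  push_cast
  ring

lemma min_psiN_zero_one_le (m u j j' n : ℤ) (hm : 0 < m) (hu : 1 ≤ u) (hj0 : 0 ≤ j)
    (hjm : 2 * j ≤ m) (hj'0 : 0 ≤ j') (hj'um : 2 * j' ≤ u * m) :
    min (psiN m u j j' 0) (psiN m u j j' 1) ≤ psiN m u j j' n := by
  refine min_zero_one_le_of_monotoneOn_of_antitoneOn ?_ ?_ n
  · refine monotoneOn_of_le_add_one Set.ordConnected_Ici fun k _ hk _ => ?_
    rw [psiN_eq_twiceN_div_two _ _ _ _ _ hm, psiN_eq_twiceN_div_two _ _ _ _ _ hm]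
    gcongr
    exact_mod_cast twiceN_le_add_one m u j _ k hm hu hj0 hjm (by linarith) hk
  · refine antitoneOn_of_add_one_le Set.ordConnected_Iic fun k _ _ hk => ?_
    rw [psiN_eq_twiceN_div_two _ _ _ _ _ hm, psiN_eq_twiceN_div_two _ _ _ _ _ hm]
    gcongr
    exact_mod_cast twiceN_add_one_le m u j _ k hm hu hj0 hjm (by omega) hk

theorem psi_N_min_at_zero_or_one_general (m u j j' : ℤ) (hm : 1 ≤ m) (hu : 1 ≤ u)
    (hj0 : 0 ≤ j) (hjm : 2 * j ≤ m) (hj'0 : 0 ≤ j') (hj'um : 2 * j' ≤ u * m) :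
    ∀ n : ℤ,
      min (-psi m j (-(((j' : ℚ) + (j : ℚ)) / 2) - 1))
          (-psi m j (-(((j' : ℚ) + (j : ℚ)) / 2) - 1 + ((u : ℚ) * (m : ℚ) + 3) / 2) +
            (u : ℚ) * ((j' : ℚ) + 1 - ((u : ℚ) * (m : ℚ) + 3) / 2)) ≤
        -psi m j (-(((j' : ℚ) + (j : ℚ)) / 2) - 1 + (n : ℚ) * ((u : ℚ) * (m : ℚ) + 3) / 2) +
          (u : ℚ) * (n : ℚ) * ((j' : ℚ) + 1 - (n : ℚ) * ((u : ℚ) * (m : ℚ) + 3) / 2) := by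
  intro n
  simpa [psiN] using min_psiN_zero_one_le m u j j' n hm hu hj0 hjm hj'0 hj'um

/-- For `m ≥ 1`, `u ≥ 1` odd, `0 ≤ j ≤ m/2`, `0 ≤ j' ≤ um/2`, the function
`N(n) = −ψ(m,j,−(j'+j)/2 − 1 + n(um+3)/2) + u·n·(j' + 1 − n(um+3)/2)` attains
its minimum over `n ∈ ℤ` at `n = 0` or `n = 1`. -/
theorem psi_N_min_at_zero_or_one (m u j j' : ℤ) (hm : 1 ≤ m) (hu : 1 ≤ u) (huodd : Odd u)
    (hj0 : 0 ≤ j) (hjm : 2 * j ≤ m) (hj'0 : 0 ≤ j') (hj'um : 2 * j' ≤ u * m) :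
    ∀ n : ℤ,
      min (-psi m j (-(((j' : ℚ) + (j : ℚ)) / 2) - 1))
          (-psi m j (-(((j' : ℚ) + (j : ℚ)) / 2) - 1 + ((u : ℚ) * (m : ℚ) + 3) / 2) +
            (u : ℚ) * ((j' : ℚ) + 1 - ((u : ℚ) * (m : ℚ) + 3) / 2)) ≤
        -psi m j (-(((j' : ℚ) + (j : ℚ)) / 2) - 1 + (n : ℚ) * ((u : ℚ) * (m : ℚ) + 3) / 2) +
          (u : ℚ) * (n : ℚ) * ((j' : ℚ) + 1 - (n : ℚ) * ((u : ℚ) * (m : ℚ) + 3) / 2) :=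
  psi_N_min_at_zero_or_one_general m u j j' hm hu hj0 hjm hj'0 hj'um
end

section
/- Let m ≥ 1 be an integer, u ≥ 1 an odd integer, and j, j' integers with 0 ≤ j ≤ m/2 and 0 ≤ j' ≤ um/2. Then −ψ(m,j,−(j'+j)/2 − 1 + (um+3)/2) + u·(j' + 1 − (um+3)/2) = u/2 − ψ(m,j,−(j'+j)/2 + 1/2). -/
theorem psi_add_mul_half (m j : ℤ) (hm : m ≠ 0) (k : ℚ) (u : ℤ) :
    psi m j (k + m / 2 * u) = psi m j k - u * (2 * k + j + u * m / 2) := by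
  have hm' : (m : ℚ) ≠ 0 := by exact_mod_cast hm
  have hq : ⌊2 * (k + m / 2 * u) / m⌋ = ⌊2 * k / m⌋ + u := by
    rw [← Int.floor_add_intCast]
    congr 1
    field_simp
  have hr : k + m / 2 * u - m / 2 * ((⌊2 * k / m⌋ + u : ℤ) : ℚ) = k - m / 2 * ⌊2 * k / m⌋ := by
    push_cast
    ring
  simp only [psi]
  rw [hq, hr]
  push_cast
  ring

theorem psi_N_one_closed_form_general (m u j j' : ℤ) (hm : 1 ≤ m) :
    -psi m j (-(((j' : ℚ) + (j : ℚ)) / 2) - 1 + ((u : ℚ) * (m : ℚ) + 3) / 2) +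
        (u : ℚ) * ((j' : ℚ) + 1 - ((u : ℚ) * (m : ℚ) + 3) / 2) =
      (u : ℚ) / 2 - psi m j (-(((j' : ℚ) + (j : ℚ)) / 2) + 1 / 2) := by
  have hshift : -(((j' : ℚ) + (j : ℚ)) / 2) - 1 + ((u : ℚ) * (m : ℚ) + 3) / 2 =
      (-(((j' : ℚ) + (j : ℚ)) / 2) + 1 / 2) + m / 2 * u := by ring
  rw [hshift, psi_add_mul_half m j (by omega)]
  ring

/-- Closed form of the exponent `N(1)` for type `A₂⁽²⁾`: for `m ≥ 1`, `u ≥ 1` odd,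
`0 ≤ j ≤ m/2`, `0 ≤ j' ≤ um/2`, one has
`−ψ(m,j,−(j'+j)/2 − 1 + (um+3)/2) + u(j' + 1 − (um+3)/2) = u/2 − ψ(m,j,−(j'+j)/2 + 1/2)`. -/
theorem psi_N_one_closed_form (m u j j' : ℤ) (hm : 1 ≤ m) (hu : 1 ≤ u) (huodd : Odd u)
    (hj0 : 0 ≤ j) (hjm : 2 * j ≤ m) (hj'0 : 0 ≤ j') (hj'um : 2 * j' ≤ u * m) :
    -psi m j (-(((j' : ℚ) + (j : ℚ)) / 2) - 1 + ((u : ℚ) * (m : ℚ) + 3) / 2) +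
        (u : ℚ) * ((j' : ℚ) + 1 - ((u : ℚ) * (m : ℚ) + 3) / 2) =
      (u : ℚ) / 2 - psi m j (-(((j' : ℚ) + (j : ℚ)) / 2) + 1 / 2) :=
  psi_N_one_closed_form_general m u j j' hm
end

section
/- Let m ≥ 1 be an integer, u ≥ 1 an odd integer, and j, j' integers with 0 ≤ j ≤ m/2 and 0 ≤ j' ≤ um/2. Then −ψ(m,j,(j'−j)/2) ≤ min( −ψ(m,j,−(j'+j)/2 − 1), u/2 − ψ(m,j,−(j'+j)/2 + 1/2) ). -/
/-! At a half-integer argument `k = n/2`, `2ψ(m,j,k)` is an integer function of `n`: writing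
`n = mq + s` with `0 ≤ s < m`, it is a quadratic polynomial in `q` plus a bounded correction
coming from `c`. Both arguments on the right are reflections `n ↦ -2j + a - n` (`a = -2, 1`)
of the one on the left. Writing the reflected point as `m(-q-e) + s'`, the quadratic parts
differ by `-2aq + e²m - 2e(s'+j)`, and `e` is confined to a few values by `0 ≤ s, s' < m`;
for each of them, and each branch of `c`, what remains is linear, with `2j' ≤ um` bounding `q`
by `u/2` in the second inequality. -/

/-- `psiCTwice m j s = 2 c(s/2)`. -/
def psiCTwice (m j s : ℤ) : ℤ :=
  if s ≤ m - 2 * j then -s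
  else if 2 ∣ s - m then m - 2 * j - 2 * s
  else m - 1 - 2 * j - 2 * s

/-- `psiTwice m j n = 2 ψ(m,j,n/2)` (`psi_half_intCast`). -/
def psiTwice (m j n : ℤ) : ℤ :=
  -(n / m) * (n + n % m + 2 * j) + psiCTwice m j (n % m)

lemma exists_eq_mul_add_of_pos {m : ℤ} (hm : 0 < m) (n : ℤ) :
    ∃ q s, 0 ≤ s ∧ s < m ∧ n = m * q + s :=
  ⟨n / m, n % m, Int.emod_nonneg n hm.ne', Int.emod_lt_of_pos n hm,
    (Int.mul_ediv_add_emod n m).symm⟩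

lemma psiTwice_mul_add {m q s : ℤ} (j : ℤ) (hm : 0 < m) (hs₀ : 0 ≤ s) (hs : s < m) :
    psiTwice m j (m * q + s) = -q * (m * q + s + s + 2 * j) + psiCTwice m j s := by
  obtain ⟨hq, hr⟩ := (Int.ediv_emod_unique (a := m * q + s) (q := q) hm).2 ⟨by ring, hs₀, hs⟩
  rw [psiTwice, hq, hr]

lemma exists_intCast_eq_half_iff (a : ℤ) : (∃ t : ℤ, (a : ℚ) / 2 = t) ↔ 2 ∣ a := by
  constructor
  · rintro ⟨t, ht⟩
    exact ⟨t, by rw [mul_comm]; exact_mod_cast (div_eq_iff two_ne_zero).1 ht⟩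
  · rintro ⟨t, rfl⟩
    exact ⟨t, by push_cast; ring⟩

open Classical in
lemma psiCTwice_div_two (m j s : ℤ) :
    (psiCTwice m j s : ℚ) / 2 =
      if (s : ℚ) / 2 ≤ (m : ℚ) / 2 - j then -((s : ℚ) / 2)
      else if ∃ t : ℤ, (s : ℚ) / 2 - (m : ℚ) / 2 = t then (m : ℚ) / 2 - j - 2 * ((s : ℚ) / 2)
      else ((m : ℚ) - 1) / 2 - j - 2 * ((s : ℚ) / 2) := by
  have hle : (s : ℚ) / 2 ≤ (m : ℚ) / 2 - j ↔ s ≤ m - 2 * j := by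
    rw [← Int.cast_le (R := ℚ)]; push_cast; constructor <;> intro h <;> linarith
  have hdvd : (∃ t : ℤ, (s : ℚ) / 2 - (m : ℚ) / 2 = t) ↔ 2 ∣ s - m := by
    rw [← exists_intCast_eq_half_iff]; push_cast; ring_nf
  unfold psiCTwice
  simp only [hle, hdvd]
  split_ifs <;> push_cast <;> ring

lemma psi_half_intCast {m : ℤ} (j n : ℤ) (hm : 0 < m) :
    psi m j ((n : ℚ) / 2) = (psiTwice m j n : ℚ) / 2 := by
  have hfloor : ⌊2 * ((n : ℚ) / 2) / m⌋ = n / m := by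
    lift m to ℕ using hm.le
    rw [mul_div_cancel₀ _ two_ne_zero]
    exact_mod_cast Rat.floor_intCast_div_natCast n m
  have hrem : (n : ℚ) / 2 - (m : ℚ) / 2 * ((n / m : ℤ) : ℚ) = ((n % m : ℤ) : ℚ) / 2 := by
    rw [Int.emod_def]; push_cast; ring
  dsimp only [psi]
  rw [hfloor, hrem, ← psiCTwice_div_two, psiTwice]
  push_cast; ring

lemma psiTwice_sub_psiTwice_reflect {m : ℤ} (j a n : ℤ) (hm : 0 < m) :
    ∃ q e s s', 0 ≤ s ∧ s < m ∧ 0 ≤ s' ∧ s' < m ∧ n = m * q + s ∧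
      e * m = s + s' + 2 * j - a ∧
      psiTwice m j n - psiTwice m j (-2 * j + a - n) =
        -2 * a * q + e ^ 2 * m - 2 * e * (s' + j) + psiCTwice m j s - psiCTwice m j s' := by
  obtain ⟨q, s, hs₀, hs, rfl⟩ := exists_eq_mul_add_of_pos hm n
  obtain ⟨q', s', hs'₀, hs', hn'⟩ := exists_eq_mul_add_of_pos hm (-2 * j + a - (m * q + s))
  have he : (-q - q') * m = s + s' + 2 * j - a := by linear_combination hn'
  refine ⟨q, -q - q', s, s', hs₀, hs, hs'₀, hs', rfl, he, ?_⟩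
  rw [hn', psiTwice_mul_add j hm hs₀ hs, psiTwice_mul_add j hm hs'₀ hs']
  linear_combination 2 * q * he

lemma psiTwice_reflect_neg_two_le {m j n : ℤ} (hm : 0 < m) (hj₀ : 0 ≤ j) (hjm : 2 * j ≤ m)
    (hn : -j ≤ n) : psiTwice m j (-2 * j - 2 - n) ≤ psiTwice m j n := by
  obtain ⟨q, e, s, s', hs₀, hs, hs'₀, hs', rfl, he, hdiff⟩ :=
    psiTwice_sub_psiTwice_reflect j (-2) n hm
  have he₁ : 1 ≤ e := by nlinarith
  have he₃ : e ≤ 3 := by nlinarith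
  have hq : -1 ≤ q := by nlinarith
  have hq₁ : e = 1 → 0 ≤ q := by rintro rfl; nlinarith
  have hC : psiCTwice m j s' - psiCTwice m j s ≤ 4 * q + e ^ 2 * m - 2 * e * (s' + j) := by
    obtain rfl | rfl | rfl : e = 1 ∨ e = 2 ∨ e = 3 := by omega
    all_goals unfold psiCTwice; split_ifs <;> omega
  rw [show -2 * j - 2 - (m * q + s) = -2 * j + -2 - (m * q + s) by ring]
  linarith

lemma psiTwice_reflect_one_le {m j n u : ℤ} (hm : 0 < m) (hj₀ : 0 ≤ j) (hjm : 2 * j ≤ m)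
    (hu : Odd u) (hnu : 2 * (n + j) ≤ u * m) :
    psiTwice m j (-2 * j + 1 - n) ≤ u + psiTwice m j n := by
  obtain ⟨q, e, s, s', hs₀, hs, hs'₀, hs', rfl, he, hdiff⟩ :=
    psiTwice_sub_psiTwice_reflect j 1 n hm
  have he₁ : -1 ≤ e := by nlinarith
  have he₂ : e ≤ 2 := by nlinarith
  have hqu : 2 * q ≤ u := by nlinarith
  have hu₂ : u % 2 = 1 := Int.odd_iff.mp hu
  have hqu₂ : m < 2 * s + 2 * j → 2 * q + 2 ≤ u := by
    intro h
    have : 2 * q + 1 < u := by nlinarith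
    omega
  have hC : psiCTwice m j s' - psiCTwice m j s ≤ u - 2 * q + e ^ 2 * m - 2 * e * (s' + j) := by
    obtain rfl | rfl | rfl | rfl : e = -1 ∨ e = 0 ∨ e = 1 ∨ e = 2 := by omega
    all_goals unfold psiCTwice; split_ifs <;> omega
  linarith

theorem psi_min_inequality_general (m u j j' : ℤ) (hm : 1 ≤ m) (huodd : Odd u)
    (hj0 : 0 ≤ j) (hjm : 2 * j ≤ m) (hj'0 : 0 ≤ j') (hj'um : 2 * j' ≤ u * m) :
    -psi m j (((j' : ℚ) - (j : ℚ)) / 2) ≤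
      min (-psi m j (-(((j' : ℚ) + (j : ℚ)) / 2) - 1))
          ((u : ℚ) / 2 - psi m j (-(((j' : ℚ) + (j : ℚ)) / 2) + 1 / 2)) := by
  have hm₀ : 0 < m := by omega
  have h₁ := psiTwice_reflect_neg_two_le (n := j' - j) hm₀ hj0 hjm (by omega)
  have h₂ := psiTwice_reflect_one_le (n := j' - j) hm₀ hj0 hjm huodd (by omega)
  have hk : ((j' : ℚ) - j) / 2 = ((j' - j : ℤ) : ℚ) / 2 := by push_cast; ring
  have hk₁ : -(((j' : ℚ) + j) / 2) - 1 = ((-2 * j - 2 - (j' - j) : ℤ) : ℚ) / 2 := by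
    push_cast; ring
  have hk₂ : -(((j' : ℚ) + j) / 2) + 1 / 2 = ((-2 * j + 1 - (j' - j) : ℤ) : ℚ) / 2 := by
    push_cast; ring
  rw [hk, hk₁, hk₂, psi_half_intCast j _ hm₀, psi_half_intCast j _ hm₀,
    psi_half_intCast j _ hm₀, le_min_iff]
  constructor
  · have := (Int.cast_le (R := ℚ)).2 h₁
    linarith
  · have := (Int.cast_le (R := ℚ)).2 h₂
    push_cast at this
    linarith

/-- For `m ≥ 1`, `u ≥ 1` odd, `0 ≤ j ≤ m/2`, `0 ≤ j' ≤ um/2`: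
`−ψ(m,j,(j'−j)/2) ≤ min(−ψ(m,j,−(j'+j)/2 − 1), u/2 − ψ(m,j,−(j'+j)/2 + 1/2))`. -/
theorem psi_min_inequality (m u j j' : ℤ) (hm : 1 ≤ m) (hu : 1 ≤ u) (huodd : Odd u)
    (hj0 : 0 ≤ j) (hjm : 2 * j ≤ m) (hj'0 : 0 ≤ j') (hj'um : 2 * j' ≤ u * m) :
    -psi m j (((j' : ℚ) - (j : ℚ)) / 2) ≤
      min (-psi m j (-(((j' : ℚ) + (j : ℚ)) / 2) - 1))
          ((u : ℚ) / 2 - psi m j (-(((j' : ℚ) + (j : ℚ)) / 2) + 1 / 2)) :=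
  psi_min_inequality_general m u j j' hm huodd hj0 hjm hj'0 hj'um
end
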